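/- For any acyclic connected component of the state transition graph of a planar or toric trinity, the image of the map s ↦ φ_s, from the set of states in the component to integer-valued functions defined on the black triangles, is closed under pointwise minimum and pointwise maximum: for any states s and t in the component, there exist states in the component whose associated functions are min{φ_s, φ_t} and max{φ_s, φ_t}. -/

import Mathlib

/-!  Combinatorial trinities, Tutte matchings (states), and clock moves,
following Hine and Kálmán, "Clock theorems for triangulated surfaces".

A trinity is encoded combinatorially: `Vertex` is the set of vertices, properly
colored by `vcol` with colors `Fin 3` (0 = red, 1 = green, 2 = blue); `White`
and `Black` are the sets of white and black triangles.  Each triangle has one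
vertex of each color (`wvert`, `bvert`) and one edge of each color (the edge of
color `c` being opposite the vertex of color `c`); across its edge of color `c`
a white triangle `w` meets the black triangle `wadj w c`, and a black triangle
`b` meets the white triangle `badj b c`.  The two triangles sharing an edge of
color `c` share their vertices of the other two colors (`bvert_wadj`).
A planar trinity carries a distinguished outer white triangle (`outer = some o`);
for a toric trinity `outer = none`. -/

structure Trinity where
  Vertex : Type
  White : Type
  Black : Type
  [vertexFintype : Fintype Vertex]
  [whiteFintype : Fintype White]
  [blackFintype : Fintype Black]
  [vertexDecEq : DecidableEq Vertex]
  [whiteDecEq : DecidableEq White]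
  [blackDecEq : DecidableEq Black]
  outer : Option White
  vcol : Vertex → Fin 3
  wvert : White → Fin 3 → Vertex
  bvert : Black → Fin 3 → Vertex
  wadj : White → Fin 3 → Black
  badj : Black → Fin 3 → White
  wvert_col : ∀ w c, vcol (wvert w c) = c
  bvert_col : ∀ b c, vcol (bvert b c) = c
  badj_wadj : ∀ w c, badj (wadj w c) c = w
  wadj_badj : ∀ b c, wadj (badj b c) c = b
  bvert_wadj : ∀ w c c', c' ≠ c → bvert (wadj w c) c' = wvert w c'

attribute [instance] Trinity.vertexFintype Trinity.whiteFintype Trinity.blackFintype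
  Trinity.vertexDecEq Trinity.whiteDecEq Trinity.blackDecEq

namespace Trinity

variable (T : Trinity)

/-- `w` is the outer white triangle. -/
def IsOuter (w : T.White) : Prop := T.outer = some w

instance : DecidablePred T.IsOuter := fun w => decidable_of_iff (T.outer = some w) Iff.rfl

/-- `v` is a root, i.e. a vertex of the outer white triangle (planar case). -/
def IsRoot (v : T.Vertex) : Prop := ∃ w, T.IsOuter w ∧ ∃ c, v = T.wvert w c

/-- A Tutte matching (state): a perfect matching between the non-outer white
triangles and incident non-root vertices.  (For a toric trinity, `IsOuter` and
`IsRoot` are empty conditions, so this is a perfect matching between all white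
triangles and all vertices.)  The value on the outer white triangle, if any, is
irrelevant and is normalized by `outer_spec`. -/
structure State where
  toFun : T.White → T.Vertex
  incident : ∀ w, ∃ c, toFun w = T.wvert w c
  injOn : ∀ w w', ¬ T.IsOuter w → ¬ T.IsOuter w' → toFun w = toFun w' → w = w'
  not_root : ∀ w, ¬ T.IsOuter w → ¬ T.IsRoot (toFun w)
  surj : ∀ v, ¬ T.IsRoot v → ∃ w, ¬ T.IsOuter w ∧ toFun w = v
  outer_spec : ∀ w, T.IsOuter w → toFun w = T.wvert w 0

namespace State

variable {T}

/-- The black triangle through which the arrow representing the match of the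
white triangle `w` passes: the arrow of the match `(w, s w)` crosses the edge
of `w` opposite the matched vertex `s w` (the edge of color `vcol (s w)`). -/
def arrowBlack (s : T.State) (w : T.White) : T.Black := T.wadj w (T.vcol (s.toFun w))

/-- The black triangle `b` is empty in the state `s`: no arrow passes through it. -/
def EmptyAt (s : T.State) (b : T.Black) : Prop :=
  ∀ w, ¬ T.IsOuter w → s.arrowBlack w ≠ b

/-- `b` is a clockwise empty black triangle of `s`:  it is empty and its three
vertices are matched with the three adjacent white triangles in the clockwise
rotational pattern. -/
def IsCW (s : T.State) (b : T.Black) : Prop :=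
  s.EmptyAt b ∧ ∀ c, s.toFun (T.badj b c) = T.bvert b (c + 1)

/-- `b` is a counter-clockwise empty black triangle of `s`. -/
def IsCCW (s : T.State) (b : T.Black) : Prop :=
  s.EmptyAt b ∧ ∀ c, s.toFun (T.badj b c) = T.bvert b (c + 2)

end State

/-- The basic clockwise move (clock move) about the empty black triangle `b`,
turning it from clockwise to counter-clockwise: `t` is obtained from `s` by
changing `b`. -/
def CWMoveAt (s t : T.State) (b : T.Black) : Prop :=
  s.IsCW b ∧ (∀ c, t.toFun (T.badj b c) = T.bvert b (c + 2)) ∧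
    ∀ w, (∀ c, w ≠ T.badj b c) → t.toFun w = s.toFun w

/-- A walk in the state transition graph, recording for each step the black
triangle about which the move is performed and the direction of the move
(`true` = clockwise, `false` = counter-clockwise). -/
inductive Walk : T.State → List (T.Black × Bool) → T.State → Prop
  | nil (s : T.State) : Walk s [] s
  | cw {s t u : T.State} {b : T.Black} {l : List (T.Black × Bool)} :
      T.CWMoveAt s t b → Walk t l u → Walk s ((b, true) :: l) u
  | ccw {s t u : T.State} {b : T.Black} {l : List (T.Black × Bool)} :
      T.CWMoveAt t s b → Walk t l u → Walk s ((b, false) :: l) u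

/-- Two states lie in the same connected component of the state transition
graph. -/
def Reaches (s t : T.State) : Prop := ∃ l, T.Walk s l t

/-- A walk consisting of clockwise moves only, about the listed black triangles. -/
def CWWalk (s : T.State) (l : List T.Black) (t : T.State) : Prop :=
  T.Walk s (l.map fun b => (b, true)) t

/-- A state is recurrent if some non-empty sequence of clockwise moves starts
and ends at it. -/
def Recurrent (s : T.State) : Prop := ∃ l : List T.Black, l ≠ [] ∧ T.CWWalk s l s

/-- `s` belongs to an acyclic component of the state transition graph: no state
in its component is recurrent. -/
def InAcyclic (s : T.State) : Prop := ∀ t, T.Reaches s t → ¬ T.Recurrent t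

/-- Two white triangles sharing an adjacent black triangle. -/
def WAdj (w w' : T.White) : Prop := ∃ c c', T.wadj w c = T.wadj w' c'

/-- Rotation (by one step, in the direction induced by the orientation) of the
white triangles around the vertex `v`. -/
def rotAt (v : T.Vertex) (w : T.White) : T.White :=
  T.badj (T.wadj w (T.vcol v + 1)) (T.vcol v + 2)

/-- The combinatorial data encode a closed connected oriented surface: the
triangles form a connected complex and the link of every vertex is a single
cycle of triangles. -/
def Surface : Prop :=
  (∀ w w' : T.White, Relation.ReflTransGen T.WAdj w w') ∧
  ∀ (v : T.Vertex) (w w' : T.White), T.wvert w (T.vcol v) = v → T.wvert w' (T.vcol v) = v →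
    ∃ k : ℕ, (T.rotAt v)^[k] w = w'

/-- A planar trinity: a trinity on the sphere (Euler characteristic 2) with a
distinguished outer white triangle. -/
def Planar : Prop :=
  T.Surface ∧ T.outer.isSome ∧ Fintype.card T.Vertex = Fintype.card T.White + 2

/-- A toric trinity: a trinity on the torus (Euler characteristic 0), with all
triangles and vertices taking part in matchings. -/
def Toric : Prop :=
  T.Surface ∧ T.outer = none ∧ Fintype.card T.Vertex = Fintype.card T.White

/-- The configuration of a general clock move: three white triangles `W 0, W 1,
W 2` and three vertices `u 0, u 1, u 2` (one of each color) such that `W c`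
contains the vertices `u c'` for both colors `c' ≠ c`; the three edges of
colors `c` of the triangles `W c` then form a closed triangle of edges through
the vertices `u`, bounding a disk on the side opposite to the whites.
(For the boundary of a black triangle `b` this recovers `W = T.badj b`,
`u = T.bvert b`.) -/
def CombConfig (W : Fin 3 → T.White) (u : Fin 3 → T.Vertex) : Prop :=
  ∀ c c' : Fin 3, c' ≠ c → T.wvert (W c) c' = u c'

/-- A general clockwise move from `s` to `t`: about some clock-move
configuration whose three (non-outer) white triangles are matched with its
three vertices, the matching is switched from the clockwise pattern to the
counter-clockwise one, all other matches being kept. -/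
def CWMove (s t : T.State) : Prop :=
  ∃ (W : Fin 3 → T.White) (u : Fin 3 → T.Vertex),
    T.CombConfig W u ∧ (∀ c, ¬ T.IsOuter (W c)) ∧
    (∀ c, s.toFun (W c) = u (c + 1)) ∧ (∀ c, t.toFun (W c) = u (c + 2)) ∧
    ∀ w, (∀ c, w ≠ W c) → t.toFun w = s.toFun w

/-- `P` exhibits the closed triangle of edges determined by the clock-move
configuration `W` as separating: `P` is a two-coloring of the triangles which
changes value exactly across the three edges of the configuration, the white
triangles `W c` being on the `P`-side. -/
def ConfigCut (W : Fin 3 → T.White) (P : T.White ⊕ T.Black → Prop) : Prop :=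
  (∀ (w : T.White) (c : Fin 3), (∀ c₀, ¬ (w = W c₀ ∧ c = c₀)) →
    (P (Sum.inl w) ↔ P (Sum.inr (T.wadj w c)))) ∧
  (∀ c, P (Sum.inl (W c))) ∧ (∀ c, ¬ P (Sum.inr (T.wadj (W c) c)))

/-- A trinity is irreducible if it is not the trinity `F` with a single black
and a single white triangle, and it is not a nontrivial connected sum; i.e.
every separating closed triangle of edges cuts off a single triangle. -/
def Irreducible : Prop :=
  1 < Fintype.card T.White ∧
  ∀ (W : Fin 3 → T.White) (u : Fin 3 → T.Vertex) (P : T.White ⊕ T.Black → Prop),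
    T.CombConfig W u → T.ConfigCut W P →
      (∃ b : T.Black, ∀ x, ¬ P x ↔ x = Sum.inr b) ∨
      (∃ w : T.White, ∀ x, P x ↔ x = Sum.inl w)

/-! ### The directed dual graphs `G_X^*`

For a color `X`, the vertices of the directed graph `G_X^*` are the vertices of
the trinity of color `X` and its directed edges are in natural bijection with
the white triangles: the white triangle `w` corresponds to the dual edge of its
edge of color `X`, directed from the vertex of color `X` of the adjacent black
triangle `wadj w X` (its tail) to the vertex of color `X` of `w` (its head).
The arrows of a state pointing to vertices of color `X` are edges of `G_X^*`. -/

/-- The head of the edge of `G_X^*` corresponding to the white triangle `w`. -/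
def head (X : Fin 3) (w : T.White) : T.Vertex := T.wvert w X

/-- The tail of the edge of `G_X^*` corresponding to the white triangle `w`. -/
def tail (X : Fin 3) (w : T.White) : T.Vertex := T.bvert (T.wadj w X) X

/-- One-step reachability in `G_X^*` along edges from the set `A`. -/
def ARel (X : Fin 3) (A : Finset T.White) (a b : T.Vertex) : Prop :=
  ∃ w ∈ A, T.tail X w = a ∧ T.head X w = b

/-- `A` is a spanning arborescence of `G_X^*`, rooted at the root of color `X`
(the vertex of color `X` of the outer triangle `o`): a spanning tree all of
whose edges point away from the root. -/
def IsArborescence (X : Fin 3) (o : T.White) (A : Finset T.White) : Prop :=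
  (∀ w ∈ A, T.head X w ≠ T.wvert o X) ∧
  (∀ v : T.Vertex, T.vcol v = X → v ≠ T.wvert o X → ∃! w, w ∈ A ∧ T.head X w = v) ∧
  (∀ v : T.Vertex, T.vcol v = X → Relation.ReflTransGen (T.ARel X A) (T.wvert o X) v)

/-- One step of the tour tracing (counter-clockwise) the boundary of a small
neighborhood of the spanning tree `A` in `G_X^*`.  A position of the tour is a
dart `(w, d)`: the edge `w` of `G_X^*` together with a direction (`true`:
towards the head, `false`: towards the tail).  From the end of the dart one
rotates to the next edge-end around the vertex; if that edge belongs to `A` it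
is traversed away from the vertex, and otherwise its end is crossed (recorded
by bouncing back towards the vertex). -/
def tourStep (X : Fin 3) (A : Finset T.White) : T.White × Bool → T.White × Bool :=
  fun p =>
    if p.2 then
      let w' := T.badj (T.wadj p.1 (X + 1)) X
      (w', decide (w' ∈ A))
    else
      let w' := T.badj (T.wadj p.1 X) (X + 2)
      (w', decide (w' ∉ A))

/-- The position of the edge `w` of `G_X^*` in the ordering `<_A` determined by
the spanning arborescence `A`: the first time the boundary tour of a
neighborhood of `A` (started on the outer white triangle `o`, i.e. at the dart
arriving at the root through `o`) travels along `w` (if `w ∈ A`) or crosses an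
end of `w` (if `w ∉ A`). -/
noncomputable def ordIdx (X : Fin 3) (o : T.White) (A : Finset T.White) (w : T.White) : ℕ :=
  sInf {k : ℕ | ((T.tourStep X A)^[k] (o, true)).1 = w}

/-- `A` is the clocked arborescence of `G_X^*`: the spanning arborescence such
that for every non-root vertex `y` of color `X`, the edge of `A` pointing to
`y` is smallest, with respect to the ordering `<_A`, among all edges of
`G_X^*` terminating at `y`. -/
def IsClocked (X : Fin 3) (o : T.White) (A : Finset T.White) : Prop :=
  T.IsArborescence X o A ∧
    ∀ w ∈ A, ∀ w' : T.White, w' ≠ w → T.head X w' = T.head X w →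
      T.ordIdx X o A w < T.ordIdx X o A w'

/-! ### Wreaths (toric trinities) -/

/-- A nonempty set `C` of edges of `G_R^*` forming a single (directed) cycle:
at every red vertex the in-degree and out-degree in `C` agree and are at most
one, and `C` is connected. -/
def IsDirCycle (C : Finset T.White) : Prop :=
  C.Nonempty ∧
  (∀ v : T.Vertex, T.vcol v = 0 →
    (C.filter fun w => T.head 0 w = v).card = (C.filter fun w => T.tail 0 w = v).card ∧
    (C.filter fun w => T.head 0 w = v).card ≤ 1) ∧
  ∀ w ∈ C, ∀ w' ∈ C,
    Relation.ReflTransGen (fun a b => a ∈ C ∧ b ∈ C ∧ T.head 0 a = T.tail 0 b) w w'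

/-- The cycle `C` of edges of `G_R^*` separates the surface: the faces of
`G_R^*` (which correspond to the green and blue vertices of the trinity) can be
two-colored so that the two faces adjacent along an edge of `G_R^*` (namely the
faces of the green and the blue endpoint of the crossed red edge) get the same
color exactly when the edge does not belong to `C`. -/
def SeparatingSet (C : Finset T.White) : Prop :=
  ∃ P : T.Vertex → Prop,
    (∀ w : T.White, w ∉ C → (P (T.wvert w 1) ↔ P (T.wvert w 2))) ∧
    ∀ w ∈ C, ¬ (P (T.wvert w 1) ↔ P (T.wvert w 2))

/-- A wreath: a set `W` of edges of the directed dual graph `G_R^*` such that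
every red vertex has exactly one edge of `W` pointing to it and the edges of
`W` form no separating cycle. -/
def IsWreath (W : Finset T.White) : Prop :=
  (∀ v : T.Vertex, T.vcol v = 0 → ∃! w, w ∈ W ∧ T.head 0 w = v) ∧
  ∀ C ⊆ W, T.IsDirCycle C → ¬ T.SeparatingSet C

end Trinity

/-! A clockwise move is determined by its black triangle, and moves at two distinct black
triangles involve disjoint triples of white triangles, so they commute, in either direction.
Hence two clockwise walks from a common state can be completed to a common state by the moves
each one lacks (counted with multiplicity), and dually two walks into a common state come from a
common state. Completing the walks from `a` to `s` and `t` gives a state with multiplicities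
`max {φ_s, φ_t}`; pulling the two completing walks back gives a state `d` below `s` and `t`. As
`a` admits no counter-clockwise move, `d` is reached from `a` by clockwise moves, and in an
acyclic component the multiset of moves of a clockwise walk from `a` depends only on its end
(extend both walks to a state without clockwise moves and compare), so `φ_d = min {φ_s, φ_t}`. -/

section LabelledTransitions

variable {S B : Type*} {R : S → B → S → Prop}

inductive LabelledPath (R : S → B → S → Prop) : S → List B → S → Prop
  | nil (s : S) : LabelledPath R s [] s
  | cons {s t u : S} {b : B} {l : List B} :
      R s b t → LabelledPath R t l u → LabelledPath R s (b :: l) u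

structure IsDiamond (R : S → B → S → Prop) : Prop where
  right_unique {s t t' : S} {b : B} : R s b t → R s b t' → t = t'
  diamond {s t t' : S} {b b' : B} :
    R s b t → R s b' t' → b ≠ b' → ∃ u, R t b' u ∧ R t' b u

def IsAcyclicFrom (R : S → B → S → Prop) (s : S) : Prop :=
  ∀ t l, LabelledPath R s l t → ∀ l', LabelledPath R t l' t → l' = []

namespace LabelledPath

theorem append {s t u : S} {l₁ l₂ : List B} (h₁ : LabelledPath R s l₁ t)
    (h₂ : LabelledPath R t l₂ u) : LabelledPath R s (l₁ ++ l₂) u := by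
  induction h₁ with
  | nil => exact h₂
  | cons hst _ ih => exact cons hst (ih h₂)

theorem reverse {s t : S} {l : List B} (h : LabelledPath R s l t) :
    LabelledPath (fun t b s => R s b t) t l.reverse s := by
  induction h with
  | nil s => exact nil s
  | cons hst _ ih => simpa using ih.append (cons hst (nil _))

theorem eq_nil_of_terminal {s t : S} {l : List B} (h : LabelledPath R s l t)
    (hs : ∀ b t', ¬ R s b t') : l = [] := by
  cases h with
  | nil => rfl
  | cons hst _ => exact absurd hst (hs _ _)

theorem strip [DecidableEq B] (hR : IsDiamond R) {s x t : S} {b : B} {l : List B} (hx : R s b x)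
    (h : LabelledPath R s l t) :
    (b ∈ l → LabelledPath R x (l.erase b) t) ∧
      (b ∉ l → ∃ t', R t b t' ∧ LabelledPath R x l t') := by
  induction h generalizing x with
  | nil s => exact ⟨fun hb => absurd hb List.not_mem_nil, fun _ => ⟨x, hx, nil x⟩⟩
  | @cons s y t b' l hy hyt ih =>
    by_cases hb : b' = b
    · subst hb
      obtain rfl := hR.right_unique hx hy
      simpa using hyt
    · obtain ⟨z, hxz, hyz⟩ := hR.diamond hx hy (Ne.symm hb)
      have hmem : b ∈ b' :: l ↔ b ∈ l := by simp [Ne.symm hb]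
      refine ⟨fun hbl => ?_, fun hbl => ?_⟩
      · rw [List.erase_cons_tail (by simpa using hb)]
        exact cons hxz ((ih hyz).1 (hmem.1 hbl))
      · obtain ⟨t', htt', hzt'⟩ := (ih hyz).2 (mt hmem.2 hbl)
        exact ⟨t', htt', cons hxz hzt'⟩

theorem exists_diff_join [DecidableEq B] (hR : IsDiamond R) {s t₁ t₂ : S} {l₁ l₂ : List B}
    (h₁ : LabelledPath R s l₁ t₁) (h₂ : LabelledPath R s l₂ t₂) :
    ∃ u, LabelledPath R t₁ (l₂.diff l₁) u ∧ LabelledPath R t₂ (l₁.diff l₂) u := by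
  induction h₁ generalizing l₂ t₂ with
  | nil s => exact ⟨t₂, by simpa using h₂, by simpa using nil t₂⟩
  | @cons s x t₁ b l₁ hx _ ih =>
    by_cases hb : b ∈ l₂
    · obtain ⟨u, hu₁, hu₂⟩ := ih ((strip hR hx h₂).1 hb)
      exact ⟨u, by simpa using hu₁, by simpa [List.cons_diff_of_mem hb] using hu₂⟩
    · obtain ⟨t', ht₂, hxt'⟩ := (strip hR hx h₂).2 hb
      obtain ⟨u, hu₁, hu₂⟩ := ih hxt'
      refine ⟨u, by simpa [List.erase_of_not_mem hb] using hu₁, ?_⟩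
      rw [List.cons_diff_of_not_mem hb]
      exact cons ht₂ hu₂

theorem exists_diff_cojoin [DecidableEq B] (hR : IsDiamond fun t b s => R s b t) {s₁ s₂ t : S}
    {l₁ l₂ : List B} (h₁ : LabelledPath R s₁ l₁ t) (h₂ : LabelledPath R s₂ l₂ t) :
    ∃ d m₁ m₂, LabelledPath R d m₁ s₁ ∧ LabelledPath R d m₂ s₂ ∧
      m₁.Perm (l₂.diff l₁) ∧ m₂.Perm (l₁.diff l₂) := by
  obtain ⟨d, hd₁, hd₂⟩ := h₁.reverse.exists_diff_join hR h₂.reverse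
  refine ⟨d, _, _, hd₁.reverse, hd₂.reverse, ?_, ?_⟩ <;>
    simp [List.perm_iff_count, List.count_diff]

theorem exists_path_from_source [DecidableEq B] (hR : IsDiamond fun t b s => R s b t)
    {a s : S} {l : List B} (ha : ∀ u b, ¬ R u b a) (has : LabelledPath R a l s)
    {d : S} {m : List B}
    (hds : LabelledPath R d m s) : ∃ l', LabelledPath R a l' d := by
  induction hds with
  | nil => exact ⟨l, has⟩
  | @cons d d' s b m hdd' _ ih =>
    obtain ⟨l', had'⟩ := ih has
    by_cases hb : b ∈ l'.reverse
    · exact ⟨_, ((strip hR hdd' had'.reverse).1 hb).reverse⟩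
    · obtain ⟨a', ha', -⟩ := (strip hR hdd' had'.reverse).2 hb
      exact absurd ha' (ha _ _)

end LabelledPath

namespace IsAcyclicFrom

theorem of_path {s t : S} {l : List B} (hs : IsAcyclicFrom R s) (h : LabelledPath R s l t) :
    IsAcyclicFrom R t :=
  fun _ _ htu => hs _ _ (h.append htu)

theorem exists_terminal [Finite S] {s : S} (hs : IsAcyclicFrom R s) :
    ∃ l z, LabelledPath R s l z ∧ ∀ b z', ¬ R z b z' := by
  let reach : S → Set S := fun x => {y | ∃ l, LabelledPath R x l y}
  obtain ⟨z, ⟨l, hsz⟩, hmin⟩ :=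
    Set.exists_min_image (reach s) (fun x => (reach x).ncard) (Set.toFinite _) ⟨s, [], .nil s⟩
  refine ⟨l, z, hsz, fun b z' hzz' => ?_⟩
  have hsub : reach z' ⊆ reach z := fun y ⟨l', hy⟩ => ⟨b :: l', .cons hzz' hy⟩
  have hz : z ∉ reach z' := fun ⟨l', hz'z⟩ =>
    List.cons_ne_nil b l' (hs z l hsz _ (.cons hzz' hz'z))
  have hlt : (reach z').ncard < (reach z).ncard :=
    Set.ncard_lt_ncard (hsub.ssubset_of_not_subset fun h => hz (h ⟨[], .nil z⟩))
      (Set.toFinite _)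
  exact (hmin z' ⟨l ++ [b], hsz.append (.cons hzz' (.nil z'))⟩).not_gt hlt

end IsAcyclicFrom

theorem LabelledPath.perm [Finite S] [DecidableEq B] (hR : IsDiamond R) {s t : S}
    {l₁ l₂ : List B} (hs : IsAcyclicFrom R s) (h₁ : LabelledPath R s l₁ t)
    (h₂ : LabelledPath R s l₂ t) :
    l₁.Perm l₂ := by
  obtain ⟨p, z, htz, hz⟩ := (hs.of_path h₁).exists_terminal
  obtain ⟨u, hu₁, hu₂⟩ := (h₁.append htz).exists_diff_join hR (h₂.append htz)
  rw [← List.perm_append_right_iff p, List.perm_iff_count]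
  intro b
  have e₁ := congrArg (List.count b) (hu₁.eq_nil_of_terminal hz)
  have e₂ := congrArg (List.count b) (hu₂.eq_nil_of_terminal hz)
  simp only [List.count_diff, List.count_append, List.count_nil] at e₁ e₂ ⊢
  omega

end LabelledTransitions

namespace Trinity

variable {T : Trinity}

theorem bvert_eq_wvert_badj (b : T.Black) {c c' : Fin 3} (h : c' ≠ c) :
    T.bvert b c' = T.wvert (T.badj b c) c' := by
  rw [← T.bvert_wadj _ _ _ h, T.wadj_badj]

theorem bvert_injective (b : T.Black) : Function.Injective (T.bvert b) := fun c c' h => by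
  simpa only [T.bvert_col] using congrArg T.vcol h

theorem IsOuter.eq {w w' : T.White} (h : T.IsOuter w) (h' : T.IsOuter w') : w = w' :=
  Option.some.inj (h.symm.trans h')

theorem State.toFun_injective :
    Function.Injective (State.toFun : T.State → T.White → T.Vertex) := by
  rintro ⟨⟩ ⟨⟩ rfl
  rfl

instance : Finite T.State := Finite.of_injective _ State.toFun_injective

namespace State

theorem isOuter_perm_iff {σ : Equiv.Perm T.White} (hσ : ∀ w, T.IsOuter w → σ w = w)
    {w : T.White} : T.IsOuter (σ w) ↔ T.IsOuter w :=
  ⟨fun h => σ.injective (hσ _ h) ▸ h, fun h => (hσ w h).symm ▸ h⟩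

def permute (s : T.State) (σ : Equiv.Perm T.White) (hσ : ∀ w, T.IsOuter w → σ w = w)
    (hinc : ∀ w, ∃ c, s.toFun (σ w) = T.wvert w c) : T.State where
  toFun w := s.toFun (σ w)
  incident := hinc
  injOn w w' hw hw' h :=
    σ.injective (s.injOn _ _ (mt (isOuter_perm_iff hσ).1 hw) (mt (isOuter_perm_iff hσ).1 hw') h)
  not_root w hw := s.not_root _ (mt (isOuter_perm_iff hσ).1 hw)
  surj v hv := by
    obtain ⟨w, hw, rfl⟩ := s.surj v hv
    refine ⟨σ.symm w, fun h => hw ?_, by simp⟩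
    simpa using (isOuter_perm_iff hσ).2 h
  outer_spec w hw := by simpa [hσ w hw] using s.outer_spec w hw

/-- `k = 1` is the clockwise pattern of `IsCW`, `k = 2` the counter-clockwise one of `IsCCW`. -/
def Rotates (s : T.State) (b : T.Black) (k : Fin 3) : Prop :=
  ∀ c, s.toFun (T.badj b c) = T.bvert b (c + k)

variable {s : T.State} {b b' : T.Black} {k : Fin 3}

theorem Rotates.badj_injective (h : s.Rotates b k) : Function.Injective (T.badj b) :=
  fun c c' hc => add_right_cancel (bvert_injective b (by rw [← h, ← h, hc]))

theorem Rotates.badj_ne (h : s.Rotates b k) (h' : s.Rotates b' k) (hb : b ≠ b') (c c' : Fin 3) :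
    T.badj b c ≠ T.badj b' c' := by
  intro hc
  have hcol := congrArg T.vcol ((h c).symm.trans (hc ▸ h' c'))
  simp only [T.bvert_col, add_left_inj] at hcol
  subst hcol
  exact hb (by rw [← T.wadj_badj b c, hc, T.wadj_badj])

theorem Rotates.not_isOuter (h : s.Rotates b k) (hk : k ≠ 0) (c : Fin 3) :
    ¬ T.IsOuter (T.badj b c) := by
  intro ho
  have hne : T.badj b (c + k) ≠ T.badj b c := fun e => hk (by simpa using h.badj_injective e)
  -- the partner of `badj b (c + k)` would be a root
  refine s.not_root _ (fun ho' => hne (ho'.eq ho)) ⟨_, ho, c + k + k, ?_⟩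
  rw [h, bvert_eq_wvert_badj b]
  omega

theorem Rotates.emptyAt (h : s.Rotates b k) (hk : k ≠ 0) : s.EmptyAt b := by
  intro w _ hwb
  have hw : T.badj b (T.vcol (s.toFun w)) = w := by rw [← hwb]; exact T.badj_wadj _ _
  have hcol := T.bvert_col b (T.vcol (s.toFun w) + k)
  rw [← h, hw] at hcol
  exact hk (by simpa using hcol.symm)

theorem isCW_iff : s.IsCW b ↔ s.Rotates b 1 :=
  ⟨fun h => h.2, fun h => ⟨h.emptyAt one_ne_zero, h⟩⟩

theorem Rotates.exists_rotates (h : s.Rotates b k) (hk : k ≠ 0) {k' : Fin 3} (hk' : k' ≠ 0) :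
    ∃ t : T.State, t.Rotates b k' ∧
      ∀ w, (∀ c, w ≠ T.badj b c) → t.toFun w = s.toFun w := by
  let σ := (Equiv.addRight (k' - k)).viaFintypeEmbedding ⟨T.badj b, h.badj_injective⟩
  have hσ : ∀ c, σ (T.badj b c) = T.badj b (c + (k' - k)) :=
    Equiv.Perm.viaFintypeEmbedding_apply_image _ ⟨T.badj b, h.badj_injective⟩
  have hσ' : ∀ w, (∀ c, w ≠ T.badj b c) → σ w = w := fun w hw =>
    Equiv.Perm.viaFintypeEmbedding_apply_notMem_range _ _ (by rintro ⟨c, rfl⟩; exact hw c rfl)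
  have hrot : ∀ c, s.toFun (σ (T.badj b c)) = T.bvert b (c + k') := fun c => by
    rw [hσ, h, add_assoc, sub_add_cancel]
  refine ⟨s.permute σ (fun w hw => hσ' w fun c hc => h.not_isOuter hk c (hc ▸ hw)) ?_, hrot,
    fun w hw => congrArg s.toFun (hσ' w hw)⟩
  intro w
  by_cases hw : ∃ c, w = T.badj b c
  · obtain ⟨c, rfl⟩ := hw
    exact ⟨c + k', by rw [hrot, bvert_eq_wvert_badj b fun e => hk' (add_eq_left.1 e)]⟩
  · push Not at hw
    rw [hσ' w hw]
    exact s.incident w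

end State

open State

def RotateAt (s t : T.State) (b : T.Black) (k k' : Fin 3) : Prop :=
  s.Rotates b k ∧ t.Rotates b k' ∧ ∀ w, (∀ c, w ≠ T.badj b c) → t.toFun w = s.toFun w

variable {s t x y : T.State} {b b' : T.Black} {k k' : Fin 3}

theorem rotateAt_comm : RotateAt s t b k k' ↔ RotateAt t s b k' k :=
  ⟨fun ⟨hs, ht, h⟩ => ⟨ht, hs, fun w hw => (h w hw).symm⟩,
    fun ⟨ht, hs, h⟩ => ⟨hs, ht, fun w hw => (h w hw).symm⟩⟩

theorem cwMoveAt_iff : T.CWMoveAt s t b ↔ RotateAt s t b 1 2 := by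
  rw [CWMoveAt, isCW_iff]
  rfl

theorem RotateAt.right_unique (h : RotateAt s t b k k') (h' : RotateAt s y b k k') : t = y := by
  refine State.toFun_injective (funext fun w => ?_)
  by_cases hw : ∃ c, w = T.badj b c
  · obtain ⟨c, rfl⟩ := hw
    rw [h.2.1 c, h'.2.1 c]
  · push Not at hw
    rw [h.2.2 w hw, h'.2.2 w hw]

theorem RotateAt.rotates_of_disjoint (h : RotateAt s t b k k') {j : Fin 3} (h' : s.Rotates b' j)
    (hdisj : ∀ c c', T.badj b' c ≠ T.badj b c') : t.Rotates b' j := fun c => by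
  rw [h.2.2 _ (hdisj c), h' c]

theorem RotateAt.diamond (hx : RotateAt s x b k k') (hy : RotateAt s y b' k k') (hb : b ≠ b')
    (hk : k ≠ 0) (hk' : k' ≠ 0) : ∃ z, RotateAt x z b' k k' ∧ RotateAt y z b k k' := by
  have hdisj := hx.1.badj_ne hy.1 hb
  have hxb' : x.Rotates b' k := hx.rotates_of_disjoint hy.1 fun c c' => (hdisj c' c).symm
  obtain ⟨z, hzb', hzx⟩ := hxb'.exists_rotates hk hk'
  have hxz : RotateAt x z b' k k' := ⟨hxb', hzb', hzx⟩
  refine ⟨z, hxz, hy.rotates_of_disjoint hx.1 hdisj, hxz.rotates_of_disjoint hx.2.1 hdisj,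
    fun w hw => ?_⟩
  by_cases hw' : ∃ c, w = T.badj b' c
  · obtain ⟨c, rfl⟩ := hw'
    rw [hzb' c, hy.2.1 c]
  · push Not at hw'
    rw [hzx w hw', hx.2.2 w hw, hy.2.2 w hw']

theorem isDiamond_rotateAt (hk : k ≠ 0) (hk' : k' ≠ 0) :
    IsDiamond fun s b t => RotateAt (T := T) s t b k k' :=
  ⟨fun h h' => h.right_unique h', fun hx hy hb => hx.diamond hy hb hk hk'⟩

variable (T) in
def cwStep (s : T.State) (b : T.Black) (t : T.State) : Prop := T.CWMoveAt s t b

theorem cwStep_eq : T.cwStep = fun s b t => RotateAt s t b 1 2 := by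
  funext s b t
  exact propext cwMoveAt_iff

theorem isDiamond_cwStep : IsDiamond T.cwStep :=
  cwStep_eq ▸ isDiamond_rotateAt (by decide) (by decide)

theorem isDiamond_cwStep_reverse : IsDiamond fun t b s => T.cwStep s b t := by
  simpa only [cwStep_eq, rotateAt_comm (k := 1)] using
    isDiamond_rotateAt (T := T) (by decide) (by decide)

theorem cwWalk_iff {l : List T.Black} : T.CWWalk s l t ↔ LabelledPath T.cwStep s l t := by
  induction l generalizing s with
  | nil =>
    refine ⟨fun h => ?_, fun h => ?_⟩ <;> cases h
    exacts [.nil _, .nil _]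
  | cons b l ih =>
    refine ⟨fun h => ?_, fun h => ?_⟩ <;> cases h
    · exact .cons ‹_› (ih.1 ‹_›)
    · exact Walk.cw ‹_› (ih.2 ‹_›)

theorem InAcyclic.isAcyclicFrom {a : T.State} (h : T.InAcyclic a) : IsAcyclicFrom T.cwStep a :=
  fun z _ haz l hz => by_contra fun hl => h z ⟨_, cwWalk_iff.2 haz⟩ ⟨l, hl, cwWalk_iff.2 hz⟩

end Trinity

theorem multiplicity_functions_closed_under_min_and_max_general
    (T : Trinity) (a : T.State) (hacyc : T.InAcyclic a)
    (hmin : ¬ ∃ (u : T.State) (b : T.Black), T.CWMoveAt u a b)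
    (s t : T.State) (ls lt : List T.Black)
    (hs : T.CWWalk a ls s) (ht : T.CWWalk a lt t) :
    (∃ (m : T.State) (lm : List T.Black), T.CWWalk a lm m ∧
      ∀ b : T.Black, lm.count b = min (ls.count b) (lt.count b)) ∧
    (∃ (j : T.State) (lj : List T.Black), T.CWWalk a lj j ∧
      ∀ b : T.Black, lj.count b = max (ls.count b) (lt.count b)) := by
  simp only [Trinity.cwWalk_iff] at hs ht ⊢
  obtain ⟨u, hsu, htu⟩ := hs.exists_diff_join Trinity.isDiamond_cwStep ht
  obtain ⟨d, m, -, hds, -, hm, -⟩ := hsu.exists_diff_cojoin Trinity.isDiamond_cwStep_reverse htu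
  obtain ⟨ld, had⟩ := hs.exists_path_from_source Trinity.isDiamond_cwStep_reverse
    (fun u b h => hmin ⟨u, b, h⟩) hds
  have hperm := (had.append hds).perm Trinity.isDiamond_cwStep hacyc.isAcyclicFrom hs
  refine ⟨⟨d, ld, had, fun b => ?_⟩, ⟨u, ls ++ lt.diff ls, hs.append hsu, fun b => ?_⟩⟩
  · have hd := hperm.count_eq b
    rw [List.count_append, hm.count_eq, List.count_diff, List.count_diff, List.count_diff] at hd
    omega
  · rw [List.count_append, List.count_diff]
    omega

/-- Proposition 3.5.  Let `a` be the minimal state of an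
acyclic component of the state transition graph of a planar or toric trinity
(the state of the component admitting no counter-clockwise moves); the function
`φ_s` of a state `s` of the component records how many times each black
triangle is changed along any path of clockwise moves from `a` to `s`.  Then
the image of `s ↦ φ_s` is closed under pointwise minima and maxima: for states
`s`, `t` of the component there are states of the component whose functions are
`min {φ_s, φ_t}` and `max {φ_s, φ_t}`. -/
theorem multiplicity_functions_closed_under_min_and_max
    (T : Trinity) (hpt : T.Planar ∨ T.Toric) (a : T.State) (hacyc : T.InAcyclic a)
    (hmin : ¬ ∃ (u : T.State) (b : T.Black), T.CWMoveAt u a b)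
    (s t : T.State) (ls lt : List T.Black)
    (hs : T.CWWalk a ls s) (ht : T.CWWalk a lt t) :
    (∃ (m : T.State) (lm : List T.Black), T.CWWalk a lm m ∧
      ∀ b : T.Black, lm.count b = min (ls.count b) (lt.count b)) ∧
    (∃ (j : T.State) (lj : List T.Black), T.CWWalk a lj j ∧
      ∀ b : T.Black, lj.count b = max (ls.count b) (lt.count b)) :=
  multiplicity_functions_closed_under_min_and_max_general T a hacyc hmin s t ls lt hs ht
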